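/- arXiv:1502.05277 — 2 statements merged into one kernel-verified Lean document; each statement's English description precedes it below -/
import Mathlib

section
/- Let G be a finite simple graph and let T be a subset of V(G). Then td(G) = td(G⟨T⟩) + td(G − T) if and only if there exists a td(G)-ranking of G in which every vertex of T receives a label strictly greater than the label of every vertex not in T. -/
/-- A `k`-ranking of a simple graph `G`: a labeling of the vertices with values from
`{1, …, k}` such that every path joining two distinct vertices with the same label
contains a vertex with a strictly higher label. -/
def IsRanking {V : Type*} (G : SimpleGraph V) (k : ℕ) (f : V → ℕ) : Prop :=
  (∀ v, 1 ≤ f v ∧ f v ≤ k) ∧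
  ∀ ⦃u v : V⦄ (p : G.Walk u v), p.IsPath → u ≠ v → f u = f v →
    ∃ w ∈ p.support, f u < f w

/-- The tree-depth of `G`: the least `k` such that `G` admits a `k`-ranking. -/
noncomputable def treedepth {V : Type*} (G : SimpleGraph V) : ℕ :=
  sInf {k | ∃ f, IsRanking G k f}

/-- The graph `G⟨S⟩` on vertex set `S`: distinct `u, v ∈ S` are adjacent iff they are
adjacent in `G`, or some connected component of `G − S` contains a vertex adjacent in
`G` to `u` and a vertex adjacent in `G` to `v`. -/
def closureOn {V : Type*} (G : SimpleGraph V) (S : Set V) : SimpleGraph S where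
  Adj u w := u ≠ w ∧ (G.Adj u.1 w.1 ∨
    ∃ a b : ↥(Sᶜ : Set V), G.Adj a.1 u.1 ∧ G.Adj b.1 w.1 ∧
      (G.induce (Sᶜ : Set V)).Reachable a b)
  symm := by
    constructor
    rintro u w ⟨hne, h | ⟨a, b, h1, h2, h3⟩⟩
    · exact ⟨hne.symm, Or.inl h.symm⟩
    · exact ⟨hne.symm, Or.inr ⟨b, a, h2, h1, h3.symm⟩⟩
  loopless := ⟨fun u h => h.1 rfl⟩

/-!
Labels below the threshold `m = max {f w | w ∉ T}` rank `G − T`, and labels above it, shifted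
down by `m`, rank `G⟨T⟩`: a path of `G` between vertices of `T` contracts to a walk of `G⟨T⟩`
through the same vertices of `T`, and conversely every edge of `G⟨T⟩` expands to a walk of `G`
whose inner vertices lie outside `T`. Hence a ranking with `T` on top splits into rankings of
`G⟨T⟩` and `G − T`, and stacking a ranking of `G⟨T⟩` on top of one of `G − T` gives a ranking of
`G` with `T` on top. So `td(G) ≤ td(G⟨T⟩) + td(G − T)` always holds, and equality holds exactly
when some optimal ranking has `T` on top.
-/

open SimpleGraph

namespace IsRanking

variable {V W : Type*} {G : SimpleGraph V} {k : ℕ} {f : V → ℕ}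

lemma exists_lt_of_walk (hf : IsRanking G k f) {u v : V} (p : G.Walk u v) (huv : u ≠ v)
    (hfuv : f u = f v) : ∃ w ∈ p.support, f u < f w := by
  classical
  obtain ⟨w, hw, hlt⟩ := hf.2 p.bypass p.bypass_isPath huv hfuv
  exact ⟨w, p.support_bypass_subset_support hw, hlt⟩

lemma treedepth_le (hf : IsRanking G k f) : treedepth G ≤ k :=
  Nat.sInf_le ⟨f, hf⟩

lemma of_forall_le {m : ℕ} (hf : IsRanking G k f) (hm : ∀ v, f v ≤ m) : IsRanking G m f :=
  ⟨fun v => ⟨(hf.1 v).1, hm v⟩, hf.2⟩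

lemma comap {H : SimpleGraph W} (hf : IsRanking G k f) (e : H ↪g G) : IsRanking H k (f ∘ e) := by
  refine ⟨fun v => hf.1 (e v), fun u v p _ huv hfuv => ?_⟩
  obtain ⟨w, hw, hlt⟩ := hf.exists_lt_of_walk (p.map e.toHom) (e.injective.ne huv) hfuv
  rw [Walk.support_map, List.mem_map] at hw
  obtain ⟨x, hx, rfl⟩ := hw
  exact ⟨x, hx, hlt⟩

end IsRanking

lemma exists_isRanking_treedepth {V : Type*} [Finite V] (G : SimpleGraph V) :
    ∃ f, IsRanking G (treedepth G) f := by
  obtain ⟨n, ⟨e⟩⟩ := Finite.exists_equiv_fin V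
  refine Nat.sInf_mem (s := {k | ∃ f, IsRanking G k f})
    ⟨n, fun v => e v + 1, fun v => ⟨le_add_self, (e v).2⟩, fun u v _ _ huv hfuv => ?_⟩
  exact absurd (e.injective (Fin.ext (Nat.succ_injective hfuv))) huv

section closureOn

variable {V : Type*} {G : SimpleGraph V} {T : Set V}

/-- `hw` says that `w` is attached to `x`: either `x = w`, or `x ∉ T` and the component of `x`
in `G − T` has a neighbour of `w`. -/
lemma exists_closureOn_walk_of_walk {x v : V} (p : G.Walk x v) (hv : v ∈ T) (w : T)
    (hw : x = w ∨ ∃ (hx : x ∉ T) (a : ↥Tᶜ), G.Adj a w ∧ (G.induce Tᶜ).Reachable ⟨x, hx⟩ a) :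
    ∃ q : (closureOn G T).Walk w ⟨v, hv⟩, ∀ y ∈ q.support, y = w ∨ y.1 ∈ p.support := by
  induction p generalizing w with
  | nil =>
    rcases hw with rfl | ⟨hx, -⟩
    · exact ⟨Walk.nil, by simp⟩
    · exact absurd hv hx
  | @cons x c v hxc p ih =>
    by_cases hc : c ∈ T
    · have hwc : w = ⟨c, hc⟩ ∨ (closureOn G T).Adj w ⟨c, hc⟩ := by
        rcases hw with rfl | ⟨hx, a, haw, hxa⟩
        · exact Or.inr ⟨fun h => hxc.ne (congrArg Subtype.val h), Or.inl hxc⟩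
        · by_cases h : w = ⟨c, hc⟩
          · exact Or.inl h
          · exact Or.inr ⟨h, Or.inr ⟨a, ⟨x, hx⟩, haw, hxc, hxa.symm⟩⟩
      obtain ⟨q, hq⟩ := ih hv ⟨c, hc⟩ (Or.inl rfl)
      have hqp : ∀ y ∈ q.support, y.1 ∈ (Walk.cons hxc p).support := fun y hy =>
        List.mem_cons_of_mem _ <| (hq y hy).elim (fun h => h ▸ p.start_mem_support) id
      rcases hwc with rfl | hadj
      · exact ⟨q, fun y hy => Or.inr (hqp y hy)⟩
      · refine ⟨q.cons hadj, fun y hy => ?_⟩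
        rw [Walk.support_cons, List.mem_cons] at hy
        exact hy.imp_right (hqp y)
    · obtain ⟨q, hq⟩ := ih hv w <| by
        refine Or.inr ⟨hc, ?_⟩
        rcases hw with rfl | ⟨hx, a, haw, hxa⟩
        · exact ⟨⟨c, hc⟩, hxc.symm, Reachable.refl _⟩
        · have hcx : (G.induce Tᶜ).Adj ⟨c, hc⟩ ⟨x, hx⟩ := hxc.symm
          exact ⟨a, haw, hcx.reachable.trans hxa⟩
      exact ⟨q, fun y hy => (hq y hy).imp_right (List.mem_cons_of_mem _)⟩

lemma exists_walk_of_closureOn_walk {u v : T} (q : (closureOn G T).Walk u v) :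
    ∃ p : G.Walk u v, ∀ x ∈ p.support, ∀ hx : x ∈ T, (⟨x, hx⟩ : T) ∈ q.support := by
  induction q with
  | nil => exact ⟨Walk.nil, fun x hx hxT => by simp_all⟩
  | @cons a c d hac q ih =>
    obtain ⟨p, hp⟩ := ih
    simp only [Walk.support_cons, List.mem_cons]
    obtain ⟨-, hG | ⟨x, y, hxa, hyc, ⟨r⟩⟩⟩ := hac
    · refine ⟨.cons hG p, fun z hz hzT => ?_⟩
      rw [Walk.support_cons, List.mem_cons] at hz
      rcases hz with rfl | hz
      · exact Or.inl rfl
      · exact Or.inr (hp z hz hzT)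
    · obtain ⟨e, he⟩ : ∃ e : G.Walk x y, ∀ z ∈ e.support, z ∉ T :=
        ⟨r.map (Embedding.induce _).toHom, fun z hz => by
          obtain ⟨s, -, rfl⟩ := List.mem_map.mp ((r.support_map _).subst hz : z ∈ _)
          exact s.2⟩
      refine ⟨.cons hxa.symm (e.append (.cons hyc p)), fun z hz hzT => ?_⟩
      rw [Walk.support_cons, List.mem_cons, Walk.mem_support_append_iff, Walk.support_cons,
        List.mem_cons] at hz
      rcases hz with rfl | hz | rfl | hz
      · exact Or.inl rfl
      · exact absurd hzT (he z hz)
      · exact absurd hzT y.2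
      · exact Or.inr (hp z hz hzT)

lemma IsRanking.closureOn_sub {k m : ℕ} {f : V → ℕ} (hf : IsRanking G k f)
    (hlow : ∀ w ∉ T, f w ≤ m) (hhigh : ∀ u ∈ T, m < f u) :
    IsRanking (closureOn G T) (k - m) (fun u => f u - m) := by
  refine ⟨fun u => ?_, fun u v q _ huv hfuv => ?_⟩
  · have := hhigh u u.2
    have := hf.1 u
    simp only
    omega
  · have hu := hhigh u u.2
    have hfuv' : f u = f v := by
      have := hhigh v v.2
      simp only at hfuv
      omega
    obtain ⟨p, hp⟩ := exists_walk_of_closureOn_walk q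
    obtain ⟨w, hw, hlt⟩ := hf.exists_lt_of_walk p (Subtype.coe_injective.ne huv) hfuv'
    have hwT : w ∈ T := by
      by_contra hwT
      have := hlow w hwT
      omega
    exact ⟨⟨w, hwT⟩, hp w hw hwT, by simp only; omega⟩

lemma IsRanking.treedepth_closureOn_add_le {k : ℕ} {f : V → ℕ} (hf : IsRanking G k f)
    (hsep : ∀ u ∈ T, ∀ w ∉ T, f w < f u) :
    treedepth (closureOn G T) + treedepth (G.induce Tᶜ) ≤ k := by
  obtain ⟨m, hmk, hlow, hhigh⟩ : ∃ m ≤ k, (∀ w ∉ T, f w ≤ m) ∧ ∀ u ∈ T, m < f u := by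
    rcases Tᶜ.eq_empty_or_nonempty with hT | ⟨w₀, hw₀⟩
    · exact ⟨0, k.zero_le, fun w hw => (Set.eq_empty_iff_forall_notMem.mp hT w hw).elim,
        fun u _ => (hf.1 u).1⟩
    · have hbdd : BddAbove (f '' Tᶜ) := ⟨k, Set.forall_mem_image.2 fun w _ => (hf.1 w).2⟩
      obtain ⟨w₁, hw₁, hm⟩ := Nat.sSup_mem ⟨_, Set.mem_image_of_mem f hw₀⟩ hbdd
      exact ⟨f w₁, (hf.1 w₁).2, fun w hw => hm ▸ le_csSup hbdd ⟨w, hw, rfl⟩,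
        fun u hu => hsep u hu w₁ hw₁⟩
  have hlower : treedepth (G.induce Tᶜ) ≤ m :=
    ((hf.comap (Embedding.induce Tᶜ)).of_forall_le fun w => hlow w w.2).treedepth_le
  have hupper : treedepth (closureOn G T) ≤ k - m := (hf.closureOn_sub hlow hhigh).treedepth_le
  omega

lemma exists_isRanking_add_of_isRanking_closureOn {a b : ℕ} {g : T → ℕ} {h : ↥Tᶜ → ℕ}
    (hg : IsRanking (closureOn G T) a g) (hh : IsRanking (G.induce Tᶜ) b h) :
    ∃ f : V → ℕ, IsRanking G (a + b) f ∧ ∀ u ∈ T, ∀ w ∉ T, f w < f u := by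
  classical
  let f : V → ℕ := fun v => if hv : v ∈ T then g ⟨v, hv⟩ + b else h ⟨v, hv⟩
  have hfT : ∀ v (hv : v ∈ T), f v = g ⟨v, hv⟩ + b := fun v hv => dif_pos hv
  have hfC : ∀ v (hv : v ∉ T), f v = h ⟨v, hv⟩ := fun v hv => dif_neg hv
  have hsep : ∀ u ∈ T, ∀ w ∉ T, f w < f u := fun u hu w hw => by
    have := (hg.1 ⟨u, hu⟩).1
    have := (hh.1 ⟨w, hw⟩).2
    rw [hfT u hu, hfC w hw]
    omega
  refine ⟨f, ⟨fun v => ?_, fun u v p _ huv hfuv => ?_⟩, hsep⟩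
  · by_cases hv : v ∈ T
    · have := hg.1 ⟨v, hv⟩
      rw [hfT v hv]
      omega
    · have := hh.1 ⟨v, hv⟩
      rw [hfC v hv]
      omega
  by_cases hu : u ∈ T
  · have hv : v ∈ T := by_contra fun hv => (hsep u hu v hv).ne' hfuv
    obtain ⟨q, hq⟩ := exists_closureOn_walk_of_walk p hv ⟨u, hu⟩ (Or.inl rfl)
    have hguv : g ⟨u, hu⟩ = g ⟨v, hv⟩ := by
      have := hfT u hu
      have := hfT v hv
      omega
    obtain ⟨w, hw, hlt⟩ := hg.exists_lt_of_walk q (fun h => huv (congrArg Subtype.val h)) hguv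
    have hfw : f w = g w + b := hfT w w.2
    refine ⟨w, ?_, by rw [hfT u hu, hfw]; omega⟩
    rcases hq w hw with rfl | hwp
    · exact p.start_mem_support
    · exact hwp
  by_cases hpT : ∃ x ∈ p.support, x ∈ T
  · obtain ⟨x, hx, hxT⟩ := hpT
    exact ⟨x, hx, hsep x hxT u hu⟩
  push Not at hpT
  have hv := hpT v p.end_mem_support
  obtain ⟨w, hw, hlt⟩ := hh.exists_lt_of_walk (p.induce Tᶜ hpT)
    (fun h => huv (congrArg Subtype.val h)) (by rw [← hfC u hu, ← hfC v hv]; exact hfuv)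
  rw [Walk.support_induce, List.mem_attachWith] at hw
  exact ⟨w, hw, by rw [hfC u hu, hfC w w.2]; exact hlt⟩

lemma exists_isRanking_treedepth_closureOn_add [Finite V] (G : SimpleGraph V) (T : Set V) :
    ∃ f : V → ℕ, IsRanking G (treedepth (closureOn G T) + treedepth (G.induce Tᶜ)) f ∧
      ∀ u ∈ T, ∀ w ∉ T, f w < f u :=
  let ⟨_, hg⟩ := exists_isRanking_treedepth (closureOn G T)
  let ⟨_, hh⟩ := exists_isRanking_treedepth (G.induce Tᶜ)
  exists_isRanking_add_of_isRanking_closureOn hg hh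

end closureOn

/-- `td(G) = td(G⟨T⟩) + td(G − T)` iff there is an optimal ranking of `G` in which every
vertex of `T` receives a strictly higher label than every vertex outside `T`. -/
theorem treedepth_eq_closureOn_add_iff {V : Type*} [Fintype V] (G : SimpleGraph V)
    (T : Set V) :
    treedepth G = treedepth (closureOn G T) + treedepth (G.induce (Tᶜ : Set V)) ↔
      ∃ f : V → ℕ, IsRanking G (treedepth G) f ∧
        ∀ u ∈ T, ∀ w ∉ T, f w < f u := by
  obtain ⟨f, hf, hsep⟩ := exists_isRanking_treedepth_closureOn_add G T
  constructor
  · intro h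
    exact h ▸ ⟨f, hf, hsep⟩
  · rintro ⟨f', hf', hsep'⟩
    exact le_antisymm hf.treedepth_le (hf'.treedepth_closureOn_add_le hsep')
end

section
/- For all integers k ≥ 3 and t with 0 ≤ t ≤ 2^{k−2} − 2, the graph R_{k,t} has tree-depth exactly k. -/
/-- The graph `R_{k,t}`: a path `v_1, …, v_{2^{k-2}+1+t}` (vertex `v_i` is index `i - 1`
in `Fin (2^(k-2)+1+t)`) together with an added edge between `v_{t+1}` (index `t`) and
`v_{2^{k-2}+1}` (index `2^(k-2)`). -/
def Rgraph (k t : ℕ) : SimpleGraph (Fin (2 ^ (k - 2) + 1 + t)) :=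
  SimpleGraph.fromRel (fun i j =>
    i.val + 1 = j.val ∨ (i.val = t ∧ j.val = 2 ^ (k - 2)))

/-!
Upper bound: label vertex `z` by `v₂(z + 2^(k-2)) + 1`. This is a ruler sequence whose top label
`k` sits only on the vertex `2^(k-2)`; a walk avoiding that vertex moves along the path
`0 — 1 — ⋯`, hence passes every vertex between its ends, and between two equal ruler labels there
is a larger one.

Lower bound: in a ranking, the largest label on a connected vertex set is attained only once.
Deleting that vertex and recursing shows that a path whose labels, counted from `0`, are all `< B`
has fewer than `2^B` vertices. Let `u` carry the largest label of a `(k-1)`-ranking of `R_{k,t}`.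
Deleting `u` leaves either a path on at least `2^(k-2)` vertices, or, if `u` lies strictly between
`t` and `2^(k-2)`, a double spider: two spiders whose centres `t` and `2^(k-2)` are joined by the
chord. The same recursion bounds the weight `max a b + max c d + 2 + min (min a b) (min c d)` of a
double spider with legs `a, b, c, d` by `2^B`, and here that weight is at least `2^(k-2)`. Either
way some label other than that of `u` reaches `k - 1`, a contradiction.
-/

open Finset

lemma lt_two_pow_of_le_two_mul_add_one {s r i j : ℕ} (hs : s ≤ 2 * r + 1) (hr : r < 2 ^ i)
    (hij : i < j) : s < 2 ^ j := by
  have : 2 ^ (i + 1) ≤ 2 ^ j := Nat.pow_le_pow_right two_pos hij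
  rw [pow_succ] at this
  omega

lemma exists_padicValNat_two_lt {a b : ℕ} (ha : 0 < a) (hb : 0 < b) (hab : a ≠ b)
    (h : padicValNat 2 a = padicValNat 2 b) :
    ∃ c, min a b < c ∧ c < max a b ∧ padicValNat 2 a < padicValNat 2 c := by
  wlog hlt : a < b generalizing a b
  · obtain ⟨c, h1, h2, h3⟩ := this hb ha hab.symm h.symm (by omega)
    exact ⟨c, by omega, by omega, h ▸ h3⟩
  obtain ⟨e, he⟩ : ∃ e, padicValNat 2 a = e := ⟨_, rfl⟩
  rw [he] at h ⊢
  obtain ⟨α, rfl⟩ : 2 ^ e ∣ a := he ▸ pow_padicValNat_dvd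
  obtain ⟨β, rfl⟩ : 2 ^ e ∣ b := h ▸ pow_padicValNat_dvd
  -- `α` and `β` are odd, so `2 ^ e * (α + 1)` lies strictly between and `2 ^ (e + 1)` divides it
  have hα : ¬ 2 ∣ α := by
    rintro ⟨γ, rfl⟩
    apply pow_succ_padicValNat_not_dvd (p := 2) ha.ne'
    rw [he]
    exact ⟨γ, by ring⟩
  have hβ : ¬ 2 ∣ β := by
    rintro ⟨γ, rfl⟩
    apply pow_succ_padicValNat_not_dvd (p := 2) hb.ne'
    rw [← h]
    exact ⟨γ, by ring⟩
  have hpos : 0 < 2 ^ e := by positivity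
  have hαβ : α + 1 < β := by
    have := Nat.lt_of_mul_lt_mul_left hlt
    omega
  rw [min_eq_left hlt.le, max_eq_right hlt.le]
  refine ⟨2 ^ e * (α + 1), Nat.mul_lt_mul_of_pos_left (by omega) hpos,
    Nat.mul_lt_mul_of_pos_left hαβ hpos, ?_⟩
  rw [← Nat.add_one_le_iff, ← padicValNat_dvd_iff_le (by positivity)]
  obtain ⟨γ, hγ⟩ : 2 ∣ α + 1 := by omega
  exact ⟨γ, by rw [hγ, pow_succ]; ring⟩

def LabelSeparated {α : Type*} (F : α → ℕ) (S : Finset α) : Prop :=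
  ∀ x ∈ S, ∀ y ∈ S, x ≠ y → F x = F y → ∃ z ∈ S, F x < F z

lemma LabelSeparated.exists_forall_lt {α : Type*} {F : α → ℕ} {S : Finset α}
    (hS : LabelSeparated F S) (hne : S.Nonempty) : ∃ v ∈ S, ∀ x ∈ S, x ≠ v → F x < F v := by
  obtain ⟨v, hv, hmax⟩ := S.exists_max_image F hne
  refine ⟨v, hv, fun x hx hxv => (hmax x hx).lt_of_ne fun hF => ?_⟩
  obtain ⟨z, hz, hlt⟩ := hS x hx v hv hxv hF
  exact (hmax z hz).not_gt (hF ▸ hlt)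

/-- `F` is the labelling of a ranking of a graph containing the path `0 — 1 — ⋯ — (n-1)`,
read along that path. -/
def LineRanked (F : ℕ → ℕ) (n : ℕ) : Prop :=
  ∀ x < n, ∀ y < n, x ≠ y → F x = F y → ∃ z, min x y ≤ z ∧ z ≤ max x y ∧ F x < F z

/-- As `LineRanked`, for the paths `x ⋯ t — m ⋯ y` through a chord `t — m`. -/
def ChordRanked (F : ℕ → ℕ) (n t m : ℕ) : Prop :=
  ∀ x y, y < n → max x t < min m y → F x = F y →
    ∃ z, (min x t ≤ z ∧ z ≤ max x t ∨ min m y ≤ z ∧ z ≤ max m y) ∧ F x < F z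

section Line
variable {F : ℕ → ℕ} {n : ℕ}

lemma LineRanked.labelSeparated_Ico (hF : LineRanked F n) {lo hi : ℕ} (hhi : hi ≤ n) :
    LabelSeparated F (Ico lo hi) := by
  intro x hx y hy hxy hF'
  rw [mem_Ico] at hx hy
  obtain ⟨z, hz1, hz2, hlt⟩ := hF x (by omega) y (by omega) hxy hF'
  exact ⟨z, mem_Ico.2 ⟨by omega, by omega⟩, hlt⟩

lemma LineRanked.lt_two_pow (hF : LineRanked F n) :
    ∀ s lo B, (∀ x, lo ≤ x → x < lo + s → x < n ∧ F x < B) → s < 2 ^ B := by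
  intro s
  induction s using Nat.strong_induction_on with
  | _ s ih =>
  intro lo B hB
  rcases Nat.eq_zero_or_pos s with rfl | hs
  · positivity
  have hn : lo + s ≤ n := by
    have := (hB (lo + s - 1) (by omega) (by omega)).1
    omega
  obtain ⟨v, hv, hmax⟩ :=
    (hF.labelSeparated_Ico (lo := lo) hn).exists_forall_lt (nonempty_Ico.2 (by omega))
  rw [mem_Ico] at hv
  -- the longer of the two intervals `[lo, v)` and `(v, lo + s)`
  obtain ⟨lo', r, hrs, hr, hsub⟩ : ∃ lo' r, r < s ∧ s ≤ 2 * r + 1 ∧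
      ∀ x, lo' ≤ x → x < lo' + r → lo ≤ x ∧ x < lo + s ∧ x ≠ v := by
    rcases le_total (v - lo) (lo + s - v - 1) with h | h
    · exact ⟨v + 1, lo + s - v - 1, by omega, by omega, fun x _ _ => by omega⟩
    · exact ⟨lo, v - lo, by omega, by omega, fun x _ _ => by omega⟩
  refine lt_two_pow_of_le_two_mul_add_one hr (ih r hrs lo' (F v) fun x h1 h2 => ?_)
    (hB v hv.1 hv.2).2
  obtain ⟨hx1, hx2, hxv⟩ := hsub x h1 h2
  exact ⟨(hB x hx1 hx2).1, hmax x (mem_Ico.2 ⟨hx1, hx2⟩) hxv⟩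

/-- The double spider: legs of lengths `a`, `b` on either side of `t` and `c`, `d` on either
side of `m`, the two centres being joined by the chord. -/
def spider (t m a b c d : ℕ) : Finset ℕ := Icc (t - a) (t + b) ∪ Icc (m - c) (m + d)

@[simp]
lemma mem_spider {t m a b c d x : ℕ} :
    x ∈ spider t m a b c d ↔ t - a ≤ x ∧ x ≤ t + b ∨ m - c ≤ x ∧ x ≤ m + d := by
  simp only [spider, mem_union, mem_Icc]

-- the invariant of the recursion: deleting any vertex leaves a piece of at least half this weight
def spiderWeight (a b c d : ℕ) : ℕ := max a b + max c d + 2 + min (min a b) (min c d)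

def SplitsOnErase (t m a b c d v : ℕ) : Prop :=
  (∃ lo r, spiderWeight a b c d ≤ 2 * r + 1 ∧
      ∀ x, lo ≤ x → x < lo + r → x ∈ spider t m a b c d ∧ x ≠ v) ∨
    ∃ a' b' c' d', a' + b' + c' + d' < a + b + c + d ∧ a' ≤ a ∧ b' ≤ b ∧ c' ≤ c ∧ d' ≤ d ∧
      spiderWeight a b c d ≤ 2 * spiderWeight a' b' c' d' + 1 ∧
      ∀ x ∈ spider t m a' b' c' d', x ∈ spider t m a b c d ∧ x ≠ v

variable {t m a b c d : ℕ}

lemma labelSeparated_spider (hline : LineRanked F n) (hchord : ChordRanked F n t m)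
    (hgap : t + b + c < m) (hd : m + d < n) :
    LabelSeparated F (spider t m a b c d) := by
  intro x hx y hy hxy hF
  rw [mem_spider] at hx hy
  rcases hx with hx | hx <;> rcases hy with hy | hy
  · obtain ⟨z, hz1, hz2, hlt⟩ := hline x (by omega) y (by omega) hxy hF
    exact ⟨z, by rw [mem_spider]; omega, hlt⟩
  · obtain ⟨z, hz, hlt⟩ := hchord x y (by omega) (by omega) hF
    exact ⟨z, by rw [mem_spider]; omega, hlt⟩
  · obtain ⟨z, hz, hlt⟩ := hchord y x (by omega) (by omega) hF.symm
    exact ⟨z, by rw [mem_spider]; omega, hF ▸ hlt⟩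
  · obtain ⟨z, hz1, hz2, hlt⟩ := hline x (by omega) y (by omega) hxy hF
    exact ⟨z, by rw [mem_spider]; omega, hlt⟩

lemma splitsOnErase_of_mem_left {v : ℕ} (ha : a ≤ t) (hgap : t + b + c < m)
    (hv1 : t - a ≤ v) (hv2 : v ≤ t + b) : SplitsOnErase t m a b c d v := by
  simp only [SplitsOnErase, mem_spider]
  rcases Nat.lt_trichotomy v t with hvt | rfl | hvt
  · rcases (by unfold spiderWeight; omega : spiderWeight a b c d ≤ 2 * (a - (t - v)) + 1 ∨
      spiderWeight a b c d ≤ 2 * spiderWeight (t - v - 1) b c d + 1) with h | h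
    · exact .inl ⟨t - a, a - (t - v), h, fun x _ _ => by omega⟩
    · exact .inr ⟨t - v - 1, b, c, d, by omega, by omega, le_rfl, le_rfl, le_rfl, h,
        fun x _ => by omega⟩
  · rcases (by unfold spiderWeight; omega : spiderWeight a b c d ≤ 2 * a + 1 ∨
      spiderWeight a b c d ≤ 2 * b + 1 ∨ spiderWeight a b c d ≤ 2 * (c + d + 1) + 1)
      with h | h | h
    · exact .inl ⟨v - a, a, h, fun x _ _ => by omega⟩
    · exact .inl ⟨v + 1, b, h, fun x _ _ => by omega⟩
    · exact .inl ⟨m - c, c + d + 1, h, fun x _ _ => by omega⟩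
  · rcases (by unfold spiderWeight; omega : spiderWeight a b c d ≤ 2 * (t + b - v) + 1 ∨
      spiderWeight a b c d ≤ 2 * spiderWeight a (v - t - 1) c d + 1) with h | h
    · exact .inl ⟨v + 1, t + b - v, h, fun x _ _ => by omega⟩
    · exact .inr ⟨a, v - t - 1, c, d, by omega, le_rfl, by omega, le_rfl, le_rfl, h,
        fun x _ => by omega⟩

lemma splitsOnErase_of_mem_right {v : ℕ} (ha : a ≤ t) (hgap : t + b + c < m)
    (hv1 : m - c ≤ v) (hv2 : v ≤ m + d) : SplitsOnErase t m a b c d v := by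
  simp only [SplitsOnErase, mem_spider]
  rcases Nat.lt_trichotomy v m with hvm | rfl | hvm
  · rcases (by unfold spiderWeight; omega : spiderWeight a b c d ≤ 2 * (c - (m - v)) + 1 ∨
      spiderWeight a b c d ≤ 2 * spiderWeight a b (m - v - 1) d + 1) with h | h
    · exact .inl ⟨m - c, c - (m - v), h, fun x _ _ => by omega⟩
    · exact .inr ⟨a, b, m - v - 1, d, by omega, le_rfl, le_rfl, by omega, le_rfl, h,
        fun x _ => by omega⟩
  · rcases (by unfold spiderWeight; omega : spiderWeight a b c d ≤ 2 * (a + b + 1) + 1 ∨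
      spiderWeight a b c d ≤ 2 * c + 1 ∨ spiderWeight a b c d ≤ 2 * d + 1)
      with h | h | h
    · exact .inl ⟨t - a, a + b + 1, h, fun x _ _ => by omega⟩
    · exact .inl ⟨v - c, c, h, fun x _ _ => by omega⟩
    · exact .inl ⟨v + 1, d, h, fun x _ _ => by omega⟩
  · rcases (by unfold spiderWeight; omega : spiderWeight a b c d ≤ 2 * (m + d - v) + 1 ∨
      spiderWeight a b c d ≤ 2 * spiderWeight a b c (v - m - 1) + 1) with h | h
    · exact .inl ⟨v + 1, m + d - v, h, fun x _ _ => by omega⟩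
    · exact .inr ⟨a, b, c, v - m - 1, by omega, le_rfl, le_rfl, le_rfl, by omega, h,
        fun x _ => by omega⟩

lemma spiderWeight_lt_two_pow (hline : LineRanked F n) (hchord : ChordRanked F n t m) :
    ∀ a b c d B, a ≤ t → t + b + c < m → m + d < n →
      (∀ x ∈ spider t m a b c d, F x < B) → spiderWeight a b c d < 2 ^ B := by
  intro a b c d
  induction h : a + b + c + d using Nat.strong_induction_on generalizing a b c d with
  | _ s ih =>
  intro B ha hgap hd hB
  obtain ⟨v, hv, hmax⟩ := (labelSeparated_spider (a := a) hline hchord hgap hd).exists_forall_lt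
    ⟨t, by rw [mem_spider]; omega⟩
  suffices ∃ r, spiderWeight a b c d ≤ 2 * r + 1 ∧ r < 2 ^ F v from
    let ⟨_, hr, hrv⟩ := this
    lt_two_pow_of_le_two_mul_add_one hr hrv (hB v hv)
  have hsplit : SplitsOnErase t m a b c d v := (mem_spider.1 hv).elim
    (fun hv => splitsOnErase_of_mem_left ha hgap hv.1 hv.2)
    (fun hv => splitsOnErase_of_mem_right ha hgap hv.1 hv.2)
  rcases hsplit with ⟨lo, r, hr, hsub⟩ | ⟨a', b', c', d', hs, ha', hb', hc', hd', hr, hsub⟩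
  · refine ⟨r, hr, hline.lt_two_pow r lo (F v) fun x h1 h2 => ?_⟩
    obtain ⟨hx, hxv⟩ := hsub x h1 h2
    exact ⟨by rw [mem_spider] at hx; omega, hmax x hx hxv⟩
  · refine ⟨_, hr, ih _ (h ▸ hs) a' b' c' d' rfl (F v) (by omega) (by omega) (by omega)
      fun x hx => ?_⟩
    obtain ⟨hx, hxv⟩ := hsub x hx
    exact hmax x hx hxv

end Line

section Ranking
variable {V : Type*} {G : SimpleGraph V} {k : ℕ} {f : V → ℕ}

lemma IsRanking.mono (hf : IsRanking G k f) {k' : ℕ} (hk : k ≤ k') : IsRanking G k' f :=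
  ⟨fun v => ⟨(hf.1 v).1, (hf.1 v).2.trans hk⟩, hf.2⟩

lemma treedepth_eq_of_isRanking (hk : IsRanking G k f) (hlt : ∀ g, ¬ IsRanking G (k - 1) g) :
    treedepth G = k := by
  refine le_antisymm (Nat.sInf_le ⟨f, hk⟩) (le_csInf ⟨k, f, hk⟩ fun j ⟨g, hg⟩ => ?_)
  by_contra! hj
  exact hlt g (hg.mono (by omega))

lemma IsRanking.exists_lt_of_walk_s10 [DecidableEq V] (hf : IsRanking G k f) {u v : V}
    (p : G.Walk u v) (huv : u ≠ v) (h : f u = f v) : ∃ w ∈ p.support, f u < f w :=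
  let ⟨w, hw, hlt⟩ := hf.2 p.bypass p.bypass_isPath huv h
  ⟨w, p.support_bypass_subset_support hw, hlt⟩

end Ranking

/-- The labels of a ranking of a graph on `Fin n`, read on `ℕ` and shifted to start at `0`. -/
def lineLabel {n : ℕ} (f : Fin n → ℕ) (i : ℕ) : ℕ := if h : i < n then f ⟨i, h⟩ - 1 else 0

lemma IsRanking.exists_lineLabel_lt {n k : ℕ} {G : SimpleGraph (Fin n)} {f : Fin n → ℕ}
    (hf : IsRanking G k f) {x y : ℕ} (hx : x < n) (hy : y < n) {P : ℕ → Prop}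
    (p : G.Walk ⟨x, hx⟩ ⟨y, hy⟩) (hp : ∀ z ∈ p.support, P z) (hxy : x ≠ y)
    (h : lineLabel f x = lineLabel f y) : ∃ z, P z ∧ lineLabel f x < lineLabel f z := by
  simp only [lineLabel, dif_pos hx, dif_pos hy] at h ⊢
  have := (hf.1 ⟨x, hx⟩).1
  have := (hf.1 ⟨y, hy⟩).1
  obtain ⟨w, hw, hlt⟩ := hf.exists_lt_of_walk_s10 p (by simpa using hxy) (by omega)
  refine ⟨w, hp w hw, ?_⟩
  rw [dif_pos w.isLt, Fin.eta]
  omega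

namespace Rgraph
variable {k t : ℕ}

local notation "M" => 2 ^ (k - 2)
local notation "N" => 2 ^ (k - 2) + 1 + t

lemma adj_succ {i : ℕ} (h : i + 1 < N) : (Rgraph k t).Adj ⟨i, by omega⟩ ⟨i + 1, h⟩ := by
  simp [Rgraph]

lemma adj_chord (ht : t < M) : (Rgraph k t).Adj ⟨t, by omega⟩ ⟨M, by omega⟩ := by
  simp [Rgraph]
  omega

lemma val_succ_or_of_adj {i j : Fin N} (h : (Rgraph k t).Adj i j) (hi : i.val ≠ M)
    (hj : j.val ≠ M) : i.val + 1 = j.val ∨ j.val + 1 = i.val := by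
  simp only [Rgraph, SimpleGraph.fromRel_adj] at h
  omega

lemma exists_walk_of_le {a b : ℕ} (hab : a ≤ b) (hb : b < N) :
    ∃ p : (Rgraph k t).Walk ⟨a, by omega⟩ ⟨b, hb⟩, ∀ z ∈ p.support, a ≤ z.val ∧ z.val ≤ b := by
  induction b, hab using Nat.le_induction with
  | base => exact ⟨.nil, by simp⟩
  | succ b hab ih =>
    obtain ⟨p, hp⟩ := ih (by omega)
    refine ⟨p.concat (adj_succ hb), fun z hz => ?_⟩
    rw [SimpleGraph.Walk.support_concat, List.mem_append, List.mem_singleton] at hz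
    rcases hz with hz | rfl
    · have := hp z hz
      omega
    · simp only [le_refl, and_true]
      omega

lemma exists_walk {a b : ℕ} (ha : a < N) (hb : b < N) :
    ∃ p : (Rgraph k t).Walk ⟨a, ha⟩ ⟨b, hb⟩,
      ∀ z ∈ p.support, min a b ≤ z.val ∧ z.val ≤ max a b := by
  rcases le_total a b with hab | hab
  · obtain ⟨p, hp⟩ := exists_walk_of_le hab hb
    exact ⟨p, fun z hz => by have := hp z hz; omega⟩
  · obtain ⟨p, hp⟩ := exists_walk_of_le hab ha
    refine ⟨p.reverse, fun z hz => ?_⟩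
    rw [SimpleGraph.Walk.support_reverse, List.mem_reverse] at hz
    have := hp z hz
    omega

lemma exists_mem_support_of_forall_ne {u v : Fin N} (p : (Rgraph k t).Walk u v)
    (hp : ∀ z ∈ p.support, z.val ≠ M) {x : ℕ} (h1 : min u.val v.val ≤ x)
    (h2 : x ≤ max u.val v.val) : ∃ z ∈ p.support, z.val = x := by
  induction p with
  | nil => exact ⟨_, SimpleGraph.Walk.start_mem_support _, by omega⟩
  | @cons u w v hadj q ih =>
    simp only [SimpleGraph.Walk.support_cons, List.mem_cons, forall_eq_or_imp] at hp ⊢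
    have := val_succ_or_of_adj hadj hp.1 (hp.2 _ q.start_mem_support)
    by_cases hxu : u.val = x
    · exact ⟨u, .inl rfl, hxu⟩
    · obtain ⟨z, hz, hzx⟩ := ih hp.2 (by omega) (by omega)
      exact ⟨z, .inr hz, hzx⟩

lemma isRanking_padicValNat (hk : 2 ≤ k) (ht : t < M) :
    IsRanking (Rgraph k t) k fun z => padicValNat 2 (z.val + M) + 1 := by
  have h4M : 2 ^ k = 4 * M := by
    rw [← Nat.sub_add_cancel hk, pow_add, Nat.add_sub_cancel]
    ring
  have hlt : ∀ x < N, padicValNat 2 (x + M) < k := fun x hx =>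
    (padicValNat_le_nat_log _).trans_lt (Nat.log_lt_of_lt_pow (by positivity) (by omega))
  have hM : padicValNat 2 (M + M) + 1 = k := by
    rw [← two_mul, ← pow_succ', padicValNat.prime_pow]
    omega
  refine ⟨fun z => ⟨Nat.succ_pos _, by dsimp only; have := hlt z z.isLt; omega⟩,
    fun u v p _ huv h => ?_⟩
  dsimp only at h ⊢
  obtain ⟨c, hc1, hc2, hc⟩ := exists_padicValNat_two_lt (a := u.val + M) (b := v.val + M)
    (by positivity) (by positivity) (by omega) (by omega)
  -- `p` passes through the vertex `c - M`, or else through the top vertex `M`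
  by_cases hp : ∀ z ∈ p.support, z.val ≠ M
  · obtain ⟨w, hw, hwc⟩ := exists_mem_support_of_forall_ne p hp (x := c - M) (by omega) (by omega)
    refine ⟨w, hw, ?_⟩
    rw [hwc, Nat.sub_add_cancel (by omega)]
    omega
  · push Not at hp
    obtain ⟨w, hw, hwM⟩ := hp
    refine ⟨w, hw, ?_⟩
    have := hlt (c - M) (by omega)
    rw [Nat.sub_add_cancel (by omega)] at this
    simp only [hwM, hM]
    omega

lemma lineRanked_lineLabel {k' : ℕ} {f : Fin N → ℕ} (hf : IsRanking (Rgraph k t) k' f) :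
    LineRanked (lineLabel f) N := by
  intro x hx y hy hxy h
  obtain ⟨p, hp⟩ := exists_walk (k := k) (t := t) hx hy
  obtain ⟨z, ⟨hz1, hz2⟩, hlt⟩ :=
    hf.exists_lineLabel_lt hx hy p (P := fun z => min x y ≤ z ∧ z ≤ max x y) hp hxy h
  exact ⟨z, hz1, hz2, hlt⟩

lemma chordRanked_lineLabel {k' : ℕ} {f : Fin N → ℕ} (hf : IsRanking (Rgraph k t) k' f)
    (ht : t < M) : ChordRanked (lineLabel f) N t M := by
  intro x y hy hxy h
  obtain ⟨p, hp⟩ := exists_walk (k := k) (t := t) (a := x) (b := t) (by omega) (by omega)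
  obtain ⟨q, hq⟩ := exists_walk (k := k) (t := t) (a := M) (b := y) (by omega) hy
  refine hf.exists_lineLabel_lt (by omega) hy (p.append (.cons (adj_chord ht) q))
    (P := fun z => min x t ≤ z ∧ z ≤ max x t ∨ min M y ≤ z ∧ z ≤ max M y) (fun z hz => ?_)
    (by omega) h
  rw [SimpleGraph.Walk.mem_support_append_iff, SimpleGraph.Walk.support_cons,
    List.mem_cons] at hz
  rcases hz with hz | rfl | hz
  · exact .inl (hp z hz)
  · exact .inl ⟨min_le_right _ _, le_max_right _ _⟩
  · exact .inr (hq z hz)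

lemma not_isRanking (ht : t + 2 ≤ M) (f : Fin N → ℕ) :
    ¬ IsRanking (Rgraph k t) (k - 1) f := by
  intro hf
  have hline := lineRanked_lineLabel hf
  have hchord := chordRanked_lineLabel hf (by omega)
  obtain ⟨u, hu, hmax⟩ := (hline.labelSeparated_Ico (lo := 0) le_rfl).exists_forall_lt
    (nonempty_Ico.2 (by omega))
  rw [mem_Ico] at hu
  have hpow : 2 ^ lineLabel f u ≤ M := by
    refine Nat.pow_le_pow_right two_pos ?_
    have := (hf.1 ⟨u, hu.2⟩).2
    rw [lineLabel, dif_pos hu.2]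
    omega
  have hlt : ∀ x < N, x ≠ u → lineLabel f x < lineLabel f u :=
    fun x hx hxu => hmax x (mem_Ico.2 ⟨Nat.zero_le _, hx⟩) hxu
  rcases show u ≤ t ∨ M ≤ u ∨ t < u ∧ u < M by omega with hut | hMu | ⟨htu, huM⟩
  · have := hline.lt_two_pow (N - u - 1) (u + 1) _
      fun x h1 h2 => ⟨by omega, hlt x (by omega) (by omega)⟩
    omega
  · have := hline.lt_two_pow u 0 _ fun x _ h2 => ⟨by omega, hlt x (by omega) (by omega)⟩
    omega
  · have := spiderWeight_lt_two_pow hline hchord t (u - 1 - t) (M - 1 - u) t _ le_rfl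
      (by omega) (by omega) fun x hx => by
        rw [mem_spider] at hx
        exact hlt x (by omega) (by omega)
    have : M ≤ spiderWeight t (u - 1 - t) (M - 1 - u) t := by
      unfold spiderWeight
      omega
    omega

end Rgraph

/-- For `k ≥ 3` and `0 ≤ t ≤ 2^(k-2) − 2`, the graph `R_{k,t}` has tree-depth `k`. -/
theorem treedepth_Rgraph (k t : ℕ) (hk : 3 ≤ k) (ht : t ≤ 2 ^ (k - 2) - 2) :
    treedepth (Rgraph k t) = k := by
  have hM : 2 ≤ 2 ^ (k - 2) := Nat.le_self_pow (by omega) 2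
  exact treedepth_eq_of_isRanking (Rgraph.isRanking_padicValNat (by omega) (by omega))
    (Rgraph.not_isRanking (by omega))
end
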